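/- Let φ_c, φ_j, ψ be scale functions with φ_c(r) ≤ φ_j(r) for r ∈ (0,1] and φ_c(r) ≥ φ_j(r) for r > 1, φ := φ_c ∧ φ_j, and suppose ∫₀^∞ (1∧t)/(tψ(φ⁻¹(t)))dt < ∞. Define φ̄(λ) := ∫₀^∞ (1-e^{-λt})/(tψ(φ⁻¹(t)))dt. Then there exists C > 0 such that 1/ψ(r) ≤ C φ̄(φ_j(r)⁻¹) for all r ≥ 1. -/

import Mathlib

open Real Set MeasureTheory Metric

/-- A scale function satisfying `LU(α₁, α₂)`. -/
def LU (α₁ α₂ : ℝ) (ψ : ℝ → ℝ) : Prop :=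
  ContinuousOn ψ (Ici 0) ∧ StrictMonoOn ψ (Ici 0) ∧ ψ 0 = 0 ∧ ψ 1 = 1 ∧
    ∃ C : ℝ, 1 ≤ C ∧ ∀ r R : ℝ, 0 < r → r ≤ R →
      C⁻¹ * (R / r) ^ α₁ ≤ ψ R / ψ r ∧ ψ R / ψ r ≤ C * (R / r) ^ α₂

/-!
Fix `r ≥ 1` and put `a = φj r`. The lower LU bound of `φj` gives `K > 1` with
`b = φj (K r) ≥ 2a`. On `(a, b]` we have `1 - exp (-t/a) ≥ 1 - e⁻¹`, and `φ⁻¹ t ≤ K r` because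
`φ = φj` beyond `1`; hence the integral over `(a, b]` alone is at least
`(1 - e⁻¹) (b - a) / (b ψ(K r)) ≥ (1 - e⁻¹) / (2 ψ(K r))`. The upper LU bound of `ψ` turns
`ψ (K r)` into `C K^γ₂ ψ r`.
-/

open Filter

namespace LU

variable {α₁ α₂ : ℝ} {φ : ℝ → ℝ}

lemma pos (h : LU α₁ α₂ φ) {r : ℝ} (hr : 0 < r) : 0 < φ r := by
  simpa [h.2.2.1] using h.2.1 (mem_Ici.2 le_rfl) hr.le hr

lemma tendsto_atTop (h : LU α₁ α₂ φ) (hα₁ : 0 < α₁) : Tendsto φ atTop atTop := by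
  obtain ⟨-, -, -, hφ1, C, hC, hLU⟩ := h
  refine tendsto_atTop_mono' atTop ((eventually_ge_atTop 1).mono fun R hR => ?_)
    ((tendsto_rpow_atTop hα₁).const_mul_atTop (inv_pos.2 (one_pos.trans_le hC)))
  simpa [hφ1] using (hLU 1 R one_pos hR).1

lemma exists_two_mul_le (h : LU α₁ α₂ φ) (hα₁ : 0 < α₁) :
    ∃ K, 1 < K ∧ ∀ r : ℝ, 0 < r → 2 * φ r ≤ φ (K * r) := by
  obtain ⟨C, hC, hLU⟩ := h.2.2.2.2
  set K := (2 * C) ^ α₁⁻¹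
  have hK : 1 < K := one_lt_rpow (by linarith) (inv_pos.2 hα₁)
  have hKα : C⁻¹ * K ^ α₁ = 2 := by
    rw [rpow_inv_rpow (by positivity) hα₁.ne']
    field_simp
  refine ⟨K, hK, fun r hr => ?_⟩
  have := (hLU r (K * r) hr (le_mul_of_one_le_left hr.le hK.le)).1
  rwa [mul_div_cancel_right₀ _ hr.ne', hKα, le_div_iff₀ (h.pos hr)] at this

lemma exists_le_mul_rpow_mul (h : LU α₁ α₂ φ) :
    ∃ C, 0 < C ∧ ∀ K r : ℝ, 1 ≤ K → 0 < r → φ (K * r) ≤ C * K ^ α₂ * φ r := by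
  obtain ⟨C, hC, hLU⟩ := h.2.2.2.2
  refine ⟨C, by linarith, fun K r hK hr => ?_⟩
  have := (hLU r (K * r) hr (le_mul_of_one_le_left hr.le hK)).2
  rwa [mul_div_cancel_right₀ _ hr.ne', div_le_iff₀ (h.pos hr)] at this

end LU

lemma mem_Icc_of_leftInvOn {φ φinv : ℝ → ℝ} (hφ : ContinuousOn φ (Ici 0))
    (hinv : LeftInvOn φinv φ (Ici 0)) {r R t : ℝ} (hr : 0 ≤ r) (hrR : r ≤ R)
    (ht : t ∈ Icc (φ r) (φ R)) : φinv t ∈ Icc r R ∧ φ (φinv t) = t := by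
  obtain ⟨s, hs, rfl⟩ := intermediate_value_Icc hrR (hφ.mono fun x hx => hr.trans hx.1) ht
  rw [hinv (hr.trans hs.1 : 0 ≤ s)]
  exact ⟨hs, rfl⟩

lemma pos_of_leftInvOn {φ φinv : ℝ → ℝ} (hφ : ContinuousOn φ (Ici 0)) (hφ0 : φ 0 = 0)
    (htop : Tendsto φ atTop atTop) (hinv : LeftInvOn φinv φ (Ici 0)) {t : ℝ} (ht : 0 < t) :
    0 < φinv t := by
  obtain ⟨R, htR, hR⟩ := ((htop.eventually_ge_atTop t).and (eventually_ge_atTop 0)).exists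
  obtain ⟨hmem, hφt⟩ := mem_Icc_of_leftInvOn hφ hinv le_rfl hR
    ⟨by rw [hφ0]; exact ht.le, htR⟩
  refine hmem.1.lt_of_ne fun h => ht.ne' ?_
  rwa [← h, hφ0, eq_comm] at hφt

lemma one_sub_exp_neg_mul_le (c : ℝ) {t : ℝ} (ht : 0 ≤ t) :
    1 - exp (-c * t) ≤ max 1 c * min 1 t := by
  rcases le_total t 1 with h | h
  · rw [min_eq_right h]
    have := add_one_le_exp (-c * t)
    nlinarith [le_max_right 1 c]
  · rw [min_eq_left h, mul_one]
    linarith [exp_pos (-c * t), le_max_left 1 c]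

lemma integrableOn_one_sub_exp_div {d : ℝ → ℝ} {c : ℝ} (hc : 0 ≤ c)
    (hint : IntegrableOn (fun t => min 1 t / d t) (Ioi 0)) :
    IntegrableOn (fun t => (1 - exp (-c * t)) / d t) (Ioi 0) := by
  have hbdd : ∀ t ∈ Ioi (0 : ℝ), ‖(1 - exp (-c * t)) / min 1 t‖ ≤ max 1 c := by
    intro t (ht : 0 < t)
    have hmin : 0 < min 1 t := lt_min one_pos ht
    have hexp : exp (-c * t) ≤ 1 := exp_le_one_iff.2 (by nlinarith)
    rw [norm_of_nonneg (div_nonneg (by linarith) hmin.le), div_le_iff₀ hmin]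
    exact one_sub_exp_neg_mul_le c ht.le
  refine IntegrableOn.congr_fun (hint.bdd_mul (Measurable.aestronglyMeasurable (by fun_prop))
    (ae_restrict_of_forall_mem measurableSet_Ioi hbdd)) (fun t (ht : 0 < t) => ?_) measurableSet_Ioi
  have hmin : min 1 t ≠ 0 := (lt_min one_pos ht).ne'
  rw [div_mul_div_comm, mul_comm (min 1 t), mul_div_mul_right _ _ hmin]

lemma le_integral_one_sub_exp_div {ρ : ℝ → ℝ} (hρ : ∀ t, 0 < t → 0 < ρ t)
    (hint : IntegrableOn (fun t => min 1 t / (t * ρ t)) (Ioi 0)) {a b M : ℝ}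
    (ha : 0 < a) (hab : 2 * a ≤ b) (hM : ∀ t ∈ Ioc a b, ρ t ≤ M) :
    (1 - exp (-1)) / (2 * M) ≤ ∫ t in Ioi 0, (1 - exp (-a⁻¹ * t)) / (t * ρ t) := by
  have hb : 0 < b := by linarith
  have hM0 : 0 < M := (hρ b hb).trans_le (hM b ⟨by linarith, le_rfl⟩)
  have he : 0 < 1 - exp (-1) := sub_pos.2 (exp_lt_one_iff.2 (by norm_num))
  have hf := integrableOn_one_sub_exp_div (inv_nonneg.2 ha.le) hint
  have hf_nonneg : ∀ t ∈ Ioi (0 : ℝ), 0 ≤ (1 - exp (-a⁻¹ * t)) / (t * ρ t) := by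
    intro t (ht : 0 < t)
    have hexp : exp (-a⁻¹ * t) ≤ 1 := exp_le_one_iff.2 (by nlinarith [inv_pos.2 ha])
    exact div_nonneg (by linarith) (mul_pos ht (hρ t ht)).le
  have hf_ge : ∀ t ∈ Ioc a b, (1 - exp (-1)) / (b * M) ≤ (1 - exp (-a⁻¹ * t)) / (t * ρ t) := by
    intro t ⟨hat, htb⟩
    have ht : 0 < t := ha.trans hat
    have hta : 1 ≤ a⁻¹ * t := by rw [inv_mul_eq_div, one_le_div ha]; exact hat.le
    have hexp : exp (-a⁻¹ * t) ≤ exp (-1) := exp_le_exp.2 (by linarith)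
    exact div_le_div₀ (by linarith [exp_pos (-a⁻¹ * t)]) (by linarith) (mul_pos ht (hρ t ht))
      (mul_le_mul htb (hM t ⟨hat, htb⟩) (hρ t ht).le hb.le)
  calc (1 - exp (-1)) / (2 * M) = (1 - exp (-1)) / (b * M) * (b / 2) := by field_simp
    _ ≤ (1 - exp (-1)) / (b * M) * volume.real (Ioc a b) := by
        rw [volume_real_Ioc_of_le (by linarith)]
        gcongr
        linarith
    _ ≤ ∫ t in Ioc a b, (1 - exp (-a⁻¹ * t)) / (t * ρ t) :=
        setIntegral_ge_of_const_le_real measurableSet_Ioc measure_Ioc_lt_top.ne hf_ge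
          (hf.mono_set fun t ht => ha.trans ht.1)
    _ ≤ ∫ t in Ioi 0, (1 - exp (-a⁻¹ * t)) / (t * ρ t) :=
        setIntegral_mono_set hf (ae_restrict_of_forall_mem measurableSet_Ioi hf_nonneg)
          (Eventually.of_forall fun t ht => ha.trans ht.1)

theorem stmt_19_general (β₁c β₂c β₁j β₂j γ₁ γ₂ : ℝ) (h1j : 0 < β₁j)
    (φc φj ψ φinv : ℝ → ℝ) (hφc : LU β₁c β₂c φc) (hφj : LU β₁j β₂j φj)
    (hψ : LU γ₁ γ₂ ψ)
    (hcj₂ : ∀ r : ℝ, 1 < r → φj r ≤ φc r)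
    (hinv₁ : ∀ r : ℝ, 0 ≤ r → φinv (min (φc r) (φj r)) = r)
    (hint : IntegrableOn (fun t => min 1 t / (t * ψ (φinv t))) (Ioi (0 : ℝ))) :
    ∃ C : ℝ, 0 < C ∧ ∀ r : ℝ, 1 ≤ r →
      1 / ψ r ≤
        C * ∫ t in Ioi (0 : ℝ),
          (1 - Real.exp (-(φj r)⁻¹ * t)) / (t * ψ (φinv t)) := by
  set φ : ℝ → ℝ := fun s => min (φc s) (φj s)
  have hφ_cont : ContinuousOn φ (Ici 0) := hφc.1.inf hφj.1
  have hφ_eq : ∀ s, 1 < s → φ s = φj s := fun s hs => min_eq_right (hcj₂ s hs)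
  have hφ_top : Tendsto φ atTop atTop := (hφj.tendsto_atTop h1j).congr' <|
    (eventually_gt_atTop 1).mono fun s hs => (hφ_eq s hs).symm
  have hφ0 : φ 0 = 0 := by simp [φ, hφc.2.2.1, hφj.2.2.1]
  have hρ : ∀ t, 0 < t → 0 < ψ (φinv t) := fun t ht =>
    hψ.pos (pos_of_leftInvOn hφ_cont hφ0 hφ_top hinv₁ ht)
  obtain ⟨K, hK, hφj_double⟩ := hφj.exists_two_mul_le h1j
  obtain ⟨C, hC, hψ_scale⟩ := hψ.exists_le_mul_rpow_mul
  have he : 0 < 1 - exp (-1) := sub_pos.2 (exp_lt_one_iff.2 (by norm_num))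
  refine ⟨2 * C * K ^ γ₂ / (1 - exp (-1)), by positivity, fun r hr => ?_⟩
  have hr0 : 0 < r := by linarith
  have hKr : 1 < K * r := by nlinarith
  have hψ_le : ∀ t ∈ Ioc (φj r) (φj (K * r)), ψ (φinv t) ≤ ψ (K * r) := by
    intro t ht
    have hmem := (mem_Icc_of_leftInvOn hφ_cont hinv₁ hr0.le (le_mul_of_one_le_left hr0.le hK.le)
      ⟨(min_le_right _ _).trans ht.1.le, (hφ_eq _ hKr).symm ▸ ht.2⟩).1
    exact hψ.2.1.monotoneOn (mem_Ici.2 (hr0.le.trans hmem.1)) (mem_Ici.2 (by positivity)) hmem.2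
  have hI := le_integral_one_sub_exp_div hρ hint (hφj.pos hr0) (hφj_double r hr0) hψ_le
  have hψKr := hψ_scale K r hK.le hr0
  calc 1 / ψ r = C * K ^ γ₂ / (C * K ^ γ₂ * ψ r) := by field_simp
    _ ≤ C * K ^ γ₂ / ψ (K * r) := by gcongr; exact hψ.pos (by positivity)
    _ = 2 * C * K ^ γ₂ / (1 - exp (-1)) * ((1 - exp (-1)) / (2 * ψ (K * r))) := by field_simp
    _ ≤ _ := by gcongr

theorem stmt_19 (β₁c β₂c β₁j β₂j γ₁ γ₂ : ℝ)
    (h1c : 0 < β₁c) (hc : β₁c ≤ β₂c) (h1j : 0 < β₁j) (hj : β₁j ≤ β₂j)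
    (hγ₁ : 0 < γ₁) (hγ : γ₁ ≤ γ₂)
    (φc φj ψ φinv : ℝ → ℝ) (hφc : LU β₁c β₂c φc) (hφj : LU β₁j β₂j φj)
    (hψ : LU γ₁ γ₂ ψ)
    (hcj₁ : ∀ r : ℝ, 0 < r → r ≤ 1 → φc r ≤ φj r)
    (hcj₂ : ∀ r : ℝ, 1 < r → φj r ≤ φc r)
    (hinv₁ : ∀ r : ℝ, 0 ≤ r → φinv (min (φc r) (φj r)) = r)
    (hinv₂ : ∀ t : ℝ, 0 ≤ t → min (φc (φinv t)) (φj (φinv t)) = t)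
    (hint : IntegrableOn (fun t => min 1 t / (t * ψ (φinv t))) (Ioi (0 : ℝ))) :
    ∃ C : ℝ, 0 < C ∧ ∀ r : ℝ, 1 ≤ r →
      1 / ψ r ≤
        C * ∫ t in Ioi (0 : ℝ),
          (1 - Real.exp (-(φj r)⁻¹ * t)) / (t * ψ (φinv t)) :=
  stmt_19_general β₁c β₂c β₁j β₂j γ₁ γ₂ h1j φc φj ψ φinv hφc hφj hψ hcj₂ hinv₁ hint
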